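/- Fix k1 > 0 and let β > 0 be the absolute constant for which the bound P((Short^L_i)^c) ≤ C·exp(−c·M³) < 1/2 holds for all M large. Then for all M large enough (independent of δ) there exist positive constants C, c independent of δ such that for all sufficiently small δ > 0 and all n large enough depending on δ: P( Short^L ) ≥ C·exp(−c·δ^{−3/2}), where Short^L = ∩_{i=0}^{(k1δ^{3/2})^{−1}−2} Short^L_i. -/

import Mathlib

open MeasureTheory ProbabilityTheory

namespace LPP

/-- A vertex of the lattice `ℤ²`. -/
abbrev Vertex : Type := ℤ × ℤ

/-- The time coordinate `φ(x,y) = x + y`. -/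
def phi (u : Vertex) : ℤ := u.1 + u.2

/-- The space coordinate `ψ(x,y) = x - y`. -/
def psi (u : Vertex) : ℤ := u.1 - u.2

/-- An admissible (up-right) step of a lattice path. -/
def Step (a b : Vertex) : Prop := b = (a.1 + 1, a.2) ∨ b = (a.1, a.2 + 1)

/-- An up-right lattice path from `u` to `v`, recorded as its list of vertices. -/
structure UpRightPath (u v : Vertex) where
  verts : List Vertex
  head_eq : verts.head? = some u
  last_eq : verts.getLast? = some v
  chain : verts.Chain' Step

/-- The passage time `ℓ(γ)` of a path: the sum of the weights of its vertices,
excluding both endpoints. -/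
noncomputable def pathWeight (ω : Vertex → ℝ) {u v : Vertex} (γ : UpRightPath u v) : ℝ :=
  (γ.verts.tail.dropLast.map ω).sum

/-- The passage time `ℓ̲(γ)` of a path: the sum of the weights of its vertices,
excluding only the final endpoint. -/
noncomputable def upathWeight (ω : Vertex → ℝ) {u v : Vertex} (γ : UpRightPath u v) : ℝ :=
  (γ.verts.dropLast.map ω).sum

/-- The last passage time `T_{u,v}` (endpoint weights excluded). -/
noncomputable def lpt (ω : Vertex → ℝ) (u v : Vertex) : ℝ :=
  sSup (Set.range fun γ : UpRightPath u v => pathWeight ω γ)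

/-- The last passage time `T̲_{u,v}` (only the final endpoint's weight excluded). -/
noncomputable def ulpt (ω : Vertex → ℝ) (u v : Vertex) : ℝ :=
  sSup (Set.range fun γ : UpRightPath u v => upathWeight ω γ)

/-- `γ ∖ {u,v} ⊆ G` : all interior vertices of the path lie in the region `G`. -/
def InRegion (G : Set Vertex) {u v : Vertex} (γ : UpRightPath u v) : Prop :=
  ∀ p ∈ γ.verts, p = u ∨ p = v ∨ p ∈ G

/-- The constrained last passage time `T^G_{u,v}`. -/
noncomputable def clpt (ω : Vertex → ℝ) (G : Set Vertex) (u v : Vertex) : ℝ :=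
  sSup {r : ℝ | ∃ γ : UpRightPath u v, InRegion G γ ∧ pathWeight ω γ = r}

/-- The constrained last passage time `T̲^G_{u,v}`. -/
noncomputable def uclpt (ω : Vertex → ℝ) (G : Set Vertex) (u v : Vertex) : ℝ :=
  sSup {r : ℝ | ∃ γ : UpRightPath u v, InRegion G γ ∧ upathWeight ω γ = r}

/-- `γ` is the geodesic from `u` to `v`: it is the unique weight-maximizing up-right path. -/
def IsGeodesic (ω : Vertex → ℝ) {u v : Vertex} (γ : UpRightPath u v) : Prop :=
  (∀ γ' : UpRightPath u v, pathWeight ω γ' ≤ pathWeight ω γ) ∧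
    ∀ γ' : UpRightPath u v, pathWeight ω γ' = pathWeight ω γ → γ' = γ

/-- The value `ψ(p)` of the unique point `p` of the path `γ` on the line `𝕃_t = {φ = t}`. -/
noncomputable def pathPsiAt {u v : Vertex} (γ : UpRightPath u v) (t : ℤ) : ℤ :=
  sSup {z : ℤ | ∃ p ∈ γ.verts, phi p = t ∧ psi p = z}

/-- The strip/parallelogram `U_θ = {|ψ(u)| ≤ θ n^{2/3}, 0 ≤ φ(u) ≤ 2n}`. -/
def U (n : ℕ) (θ : ℝ) : Set Vertex :=
  {p | |(psi p : ℝ)| ≤ θ * (n : ℝ) ^ (2/3 : ℝ) ∧ 0 ≤ phi p ∧ phi p ≤ 2 * (n : ℤ)}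

/-- The left long side `U_δ^L` of the strip `U_δ`. -/
def UL (n : ℕ) (δ : ℝ) : Set Vertex :=
  {p ∈ U n δ | (psi p : ℝ) = -(δ * (n : ℝ) ^ (2/3 : ℝ))}

/-- The right long side `U_δ^R` of the strip `U_δ`. -/
def UR (n : ℕ) (δ : ℝ) : Set Vertex :=
  {p ∈ U n δ | (psi p : ℝ) = δ * (n : ℝ) ^ (2/3 : ℝ)}

/-- The lower short side `U̲_θ` of the strip `U_θ`. -/
def lowerU (n : ℕ) (θ : ℝ) : Set Vertex := {p ∈ U n θ | phi p = 0}

/-- The upper short side `Ū_θ` of the strip `U_θ`. -/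
def upperU (n : ℕ) (θ : ℝ) : Set Vertex := {p ∈ U n θ | phi p = 2 * (n : ℤ)}

/-- The region `Left_θ = {ψ(u) < -θ n^{2/3}}`. -/
def LeftReg (n : ℕ) (θ : ℝ) : Set Vertex :=
  {p | (psi p : ℝ) < -(θ * (n : ℝ) ^ (2/3 : ℝ))}

/-- The region `Right_θ = {ψ(u) > θ n^{2/3}}`. -/
def RightReg (n : ℕ) (θ : ℝ) : Set Vertex :=
  {p | θ * (n : ℝ) ^ (2/3 : ℝ) < (psi p : ℝ)}

/-- The hypothesis that the weights `w` form an i.i.d. family of rate-one exponential random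
variables, one for each vertex of `ℤ²`. -/
def IIDExponential (Ω : Type) [MeasureSpace Ω] (w : Ω → Vertex → ℝ) : Prop :=
  IsProbabilityMeasure (ℙ : Measure Ω) ∧
  (∀ v : Vertex, Measurable fun x => w x v) ∧
  iIndepFun (fun v x => w x v) ℙ ∧
  ∀ v : Vertex, Measure.map (fun x => w x v) ℙ = expMeasure 1

/-- The complement of the event `Short^L_i` : there exist `u, v ∈ U_δ^L` with
`2ik₁δ^{3/2}n ≤ φ(u) ≤ φ(v) ≤ 2(i+2)k₁δ^{3/2}n` and an up-right path `γ : u → v` with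
`γ∖{u,v} ⊆ Left_δ` and `γ ∩ Left_{Mδ} ≠ ∅` such that
`ℓ(γ) > 2(φ(v)-φ(u)) - β M² (2k₁δ^{3/2}n)^{1/3}`. -/
def ShortLCompl (n : ℕ) (δ k1 β M : ℝ) (i : ℕ) (ω : Vertex → ℝ) : Prop :=
  ∃ u ∈ UL n δ, ∃ v ∈ UL n δ,
    2 * (i : ℝ) * k1 * δ ^ (3/2 : ℝ) * (n : ℝ) ≤ (phi u : ℝ) ∧
    (phi u : ℝ) ≤ (phi v : ℝ) ∧
    (phi v : ℝ) ≤ 2 * ((i : ℝ) + 2) * k1 * δ ^ (3/2 : ℝ) * (n : ℝ) ∧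
    ∃ γ : UpRightPath u v, InRegion (LeftReg n δ) γ ∧
      (∃ p ∈ γ.verts, p ∈ LeftReg n (M * δ)) ∧
      2 * ((phi v : ℝ) - (phi u : ℝ)) -
          β * M ^ 2 * (2 * k1 * δ ^ (3/2 : ℝ) * (n : ℝ)) ^ (1/3 : ℝ) <
        pathWeight ω γ

/-! ### Auxiliary material for the proof -/

section Aux

/-- coordinatewise order on vertices -/
def cle (a b : Vertex) : Prop := a.1 ≤ b.1 ∧ a.2 ≤ b.2

instance : IsTrans Vertex cle :=
  ⟨fun _ _ _ h1 h2 => ⟨le_trans h1.1 h2.1, le_trans h1.2 h2.2⟩⟩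

lemma Step.cle {a b : Vertex} (h : Step a b) : cle a b := by
  rcases h with h | h <;> subst h <;> constructor <;> simp

lemma pairwise_head_rel {α : Type*} {R : α → α → Prop} (hrefl : ∀ a, R a a) {l : List α}
    {u : α} (hpair : l.Pairwise R) (hh : l.head? = some u) {p : α} (hp : p ∈ l) : R u p := by
  cases l with
  | nil => simp at hp
  | cons a t =>
    simp only [List.head?_cons, Option.some.injEq] at hh
    subst hh
    rcases List.mem_cons.mp hp with rfl | hpt
    · exact hrefl _
    · exact (List.pairwise_cons.mp hpair).1 p hpt

lemma verts_cle {u v : Vertex} (γ : UpRightPath u v) {p : Vertex} (hp : p ∈ γ.verts) :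
    cle u p ∧ cle p v := by
  have hpair : γ.verts.Pairwise cle :=
    List.isChain_iff_pairwise.mp (γ.chain.imp fun _ _ h => h.cle)
  refine ⟨pairwise_head_rel (fun a => ⟨le_refl _, le_refl _⟩) hpair γ.head_eq hp, ?_⟩
  have hrev : γ.verts.reverse.Pairwise (fun a b => cle b a) :=
    List.pairwise_reverse.mpr hpair
  have hh : γ.verts.reverse.head? = some v := by
    rw [List.head?_reverse]; exact γ.last_eq
  exact pairwise_head_rel (R := fun a b => cle b a) (fun a => ⟨le_refl _, le_refl _⟩)
    hrev hh (List.mem_reverse.mpr hp)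

/-- A finite region of `ℤ²` containing all vertices of all paths relevant for `ShortLCompl`. -/
noncomputable def region (n : ℕ) : Finset Vertex :=
  Finset.Icc (-(2 * (n : ℤ))) (n : ℤ) ×ˢ Finset.Icc (0 : ℤ) (3 * (n : ℤ))

lemma UL_bounds {n : ℕ} {δ : ℝ} (hn : 1 ≤ n) (hδ0 : 0 ≤ δ) (hδ1 : δ ≤ 1) {u : Vertex}
    (hu : u ∈ UL n δ) : -(n : ℤ) ≤ psi u ∧ psi u ≤ 0 ∧ 0 ≤ phi u ∧ phi u ≤ 2 * n := by
  obtain ⟨⟨_, hphi0, hphi2⟩, hpsi⟩ := hu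
  have hs0 : (0 : ℝ) ≤ δ * (n : ℝ) ^ (2/3 : ℝ) :=
    mul_nonneg hδ0 (Real.rpow_nonneg (Nat.cast_nonneg n) _)
  have hsn : δ * (n : ℝ) ^ (2/3 : ℝ) ≤ (n : ℝ) := by
    have h1 : (1 : ℝ) ≤ (n : ℝ) := by exact_mod_cast hn
    have h2 : (n : ℝ) ^ (2/3 : ℝ) ≤ (n : ℝ) ^ (1 : ℝ) :=
      Real.rpow_le_rpow_of_exponent_le h1 (by norm_num)
    rw [Real.rpow_one] at h2
    calc δ * (n : ℝ) ^ (2/3 : ℝ) ≤ 1 * (n : ℝ) ^ (2/3 : ℝ) := by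
          exact mul_le_mul_of_nonneg_right hδ1 (Real.rpow_nonneg (Nat.cast_nonneg n) _)
      _ = (n : ℝ) ^ (2/3 : ℝ) := one_mul _
      _ ≤ (n : ℝ) := h2
  refine ⟨?_, ?_, hphi0, hphi2⟩
  · have : -(n : ℝ) ≤ (psi u : ℝ) := by rw [hpsi]; linarith
    exact_mod_cast this
  · have : (psi u : ℝ) ≤ 0 := by rw [hpsi]; linarith
    exact_mod_cast this

lemma mem_region {n : ℕ} {δ : ℝ} (hn : 1 ≤ n) (hδ0 : 0 ≤ δ) (hδ1 : δ ≤ 1) {u v : Vertex}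
    (hu : u ∈ UL n δ) (hv : v ∈ UL n δ) (γ : UpRightPath u v) {p : Vertex}
    (hp : p ∈ γ.verts) : p ∈ region n := by
  obtain ⟨h1, h2⟩ := verts_cle γ hp
  obtain ⟨hu1, hu2, hu3, hu4⟩ := UL_bounds hn hδ0 hδ1 hu
  obtain ⟨hv1, hv2, hv3, hv4⟩ := UL_bounds hn hδ0 hδ1 hv
  simp only [region, Finset.mem_product, Finset.mem_Icc]
  unfold phi psi at *
  obtain ⟨h1a, h1b⟩ := h1; obtain ⟨h2a, h2b⟩ := h2
  omega

lemma shortLCompl_congr {n : ℕ} {δ k1 β M : ℝ} {i : ℕ} (hn : 1 ≤ n) (hδ0 : 0 ≤ δ)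
    (hδ1 : δ ≤ 1) {ω ω' : Vertex → ℝ} (h : ∀ p ∈ region n, ω p = ω' p)
    (hs : ShortLCompl n δ k1 β M i ω) : ShortLCompl n δ k1 β M i ω' := by
  obtain ⟨u, hu, v, hv, h1, h2, h3, γ, hγ1, hγ2, hγ3⟩ := hs
  refine ⟨u, hu, v, hv, h1, h2, h3, γ, hγ1, hγ2, ?_⟩
  have heq : pathWeight ω γ = pathWeight ω' γ := by
    unfold pathWeight
    congr 1
    refine List.map_congr_left fun p hp => ?_
    exact h p (mem_region hn hδ0 hδ1 hu hv γ
      (List.mem_of_mem_tail (List.mem_of_mem_dropLast hp)))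
  rw [← heq]; exact hγ3

lemma shortLCompl_mono {n : ℕ} {δ k1 β M : ℝ} {i : ℕ} {ω ω' : Vertex → ℝ} (h : ω ≤ ω')
    (hs : ShortLCompl n δ k1 β M i ω) : ShortLCompl n δ k1 β M i ω' := by
  obtain ⟨u, hu, v, hv, h1, h2, h3, γ, hγ1, hγ2, hγ3⟩ := hs
  refine ⟨u, hu, v, hv, h1, h2, h3, γ, hγ1, hγ2, lt_of_lt_of_le hγ3 ?_⟩
  exact List.sum_le_sum fun p _ => h p

instance instCountableUpRightPath (u v : Vertex) : Countable (UpRightPath u v) := by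
  refine Function.Injective.countable (f := fun γ : UpRightPath u v => γ.verts) ?_
  rintro ⟨a, _, _, _⟩ ⟨b, _, _, _⟩ h
  simpa using h

lemma measurable_listSum (l : List Vertex) :
    Measurable fun f : Vertex → ℝ => (l.map f).sum := by
  induction l with
  | nil => simpa using measurable_const
  | cons p t ih =>
    simp only [List.map_cons, List.sum_cons]
    exact (measurable_pi_apply p).add ih

lemma measurableSet_shortLCompl (n : ℕ) (δ k1 β M : ℝ) (i : ℕ) :
    MeasurableSet {f : Vertex → ℝ | ShortLCompl n δ k1 β M i f} := by
  have hrw : {f : Vertex → ℝ | ShortLCompl n δ k1 β M i f} =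
      ⋃ (u : Vertex) (v : Vertex) (γ : UpRightPath u v),
        {f : Vertex → ℝ |
          (u ∈ UL n δ ∧ v ∈ UL n δ ∧
            2 * (i : ℝ) * k1 * δ ^ (3/2 : ℝ) * (n : ℝ) ≤ (phi u : ℝ) ∧
            (phi u : ℝ) ≤ (phi v : ℝ) ∧
            (phi v : ℝ) ≤ 2 * ((i : ℝ) + 2) * k1 * δ ^ (3/2 : ℝ) * (n : ℝ) ∧
            InRegion (LeftReg n δ) γ ∧ (∃ p ∈ γ.verts, p ∈ LeftReg n (M * δ))) ∧
          2 * ((phi v : ℝ) - (phi u : ℝ)) -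
              β * M ^ 2 * (2 * k1 * δ ^ (3/2 : ℝ) * (n : ℝ)) ^ (1/3 : ℝ) <
            pathWeight f γ} := by
    ext f
    constructor
    · rintro ⟨u, hu, v, hv, h1, h2, h3, γ, hγ1, hγ2, hγ3⟩
      exact Set.mem_iUnion.mpr ⟨u, Set.mem_iUnion.mpr ⟨v, Set.mem_iUnion.mpr
        ⟨γ, ⟨⟨hu, hv, h1, h2, h3, hγ1, hγ2⟩, hγ3⟩⟩⟩⟩
    · intro hf
      obtain ⟨u, hmem⟩ := Set.mem_iUnion.mp hf
      obtain ⟨v, hmem⟩ := Set.mem_iUnion.mp hmem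
      obtain ⟨γ, hmem⟩ := Set.mem_iUnion.mp hmem
      obtain ⟨⟨hu, hv, h1, h2, h3, hγ1, hγ2⟩, hγ3⟩ := hmem
      exact ⟨u, hu, v, hv, h1, h2, h3, γ, hγ1, hγ2, hγ3⟩
  rw [hrw]
  refine MeasurableSet.iUnion fun u => MeasurableSet.iUnion fun v =>
    MeasurableSet.iUnion fun γ => ?_
  exact (MeasurableSet.const _).inter
    (measurableSet_lt measurable_const (measurable_listSum _))

-- ### Harris / FKG inequality for finite product measures
section Harris
variable {ν : Measure ℝ} [IsProbabilityMeasure ν]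



lemma integrable_of_bdd {X : Type*} [MeasurableSpace X] {μ : Measure X} [IsFiniteMeasure μ]
    {f : X → ℝ} (hm : Measurable f) (h0 : ∀ x, 0 ≤ f x) (h1 : ∀ x, f x ≤ 1) :
    Integrable f μ := by
  refine Integrable.mono' (integrable_const 1) hm.aestronglyMeasurable
    (Filter.Eventually.of_forall fun x => ?_)
  rw [Real.norm_eq_abs, abs_of_nonneg (h0 x)]; exact h1 x

lemma chebyshev_1d {f g : ℝ → ℝ} (hf : Antitone f) (hg : Antitone g)
    (hf0 : ∀ x, 0 ≤ f x) (hf1 : ∀ x, f x ≤ 1) (hg0 : ∀ x, 0 ≤ g x) (hg1 : ∀ x, g x ≤ 1) :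
    (∫ x, f x ∂ν) * ∫ x, g x ∂ν ≤ ∫ x, f x * g x ∂ν := by
  have hfm : Measurable f := hf.measurable
  have hgm : Measurable g := hg.measurable
  have hprod : ∀ (a b : ℝ → ℝ), Measurable a → Measurable b → (∀ x, 0 ≤ a x) →
      (∀ x, a x ≤ 1) → (∀ x, 0 ≤ b x) → (∀ x, b x ≤ 1) →
      Integrable (fun p : ℝ × ℝ => a p.1 * b p.2) (ν.prod ν) :=
    fun a b ha hb ha0 ha1 hb0 hb1 =>
      integrable_of_bdd ((ha.comp measurable_fst).mul (hb.comp measurable_snd))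
        (fun p => mul_nonneg (ha0 _) (hb0 _))
        (fun p => mul_le_one₀ (ha1 _) (hb0 _) (hb1 _))
  have i11 : Integrable (fun p : ℝ × ℝ => f p.1 * g p.1) (ν.prod ν) :=
    integrable_of_bdd ((hfm.comp measurable_fst).mul (hgm.comp measurable_fst))
      (fun p => mul_nonneg (hf0 _) (hg0 _)) (fun p => mul_le_one₀ (hf1 _) (hg0 _) (hg1 _))
  have i22 : Integrable (fun p : ℝ × ℝ => f p.2 * g p.2) (ν.prod ν) :=
    integrable_of_bdd ((hfm.comp measurable_snd).mul (hgm.comp measurable_snd))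
      (fun p => mul_nonneg (hf0 _) (hg0 _)) (fun p => mul_le_one₀ (hf1 _) (hg0 _) (hg1 _))
  have i12 : Integrable (fun p : ℝ × ℝ => f p.1 * g p.2) (ν.prod ν) :=
    hprod f g hfm hgm hf0 hf1 hg0 hg1
  have i21 : Integrable (fun p : ℝ × ℝ => f p.2 * g p.1) (ν.prod ν) := by
    have := hprod g f hgm hfm hg0 hg1 hf0 hf1
    simpa [mul_comm] using this
  have key : 0 ≤ ∫ p : ℝ × ℝ, (f p.1 - f p.2) * (g p.1 - g p.2) ∂(ν.prod ν) := by
    refine integral_nonneg fun p => ?_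
    rcases le_total p.1 p.2 with h | h
    · have h1 := hf h; have h2 := hg h
      exact mul_nonneg (by linarith) (by linarith)
    · have h1 := hf h; have h2 := hg h
      exact mul_nonneg_iff.mpr (Or.inr ⟨by linarith, by linarith⟩)
  have expand : (fun p : ℝ × ℝ => (f p.1 - f p.2) * (g p.1 - g p.2)) =
      fun p : ℝ × ℝ => f p.1 * g p.1 - f p.1 * g p.2 - (f p.2 * g p.1 - f p.2 * g p.2) := by
    funext p; ring
  rw [expand] at key
  have eA := integral_sub (i11.sub i12) (i21.sub i22)
  simp only [Pi.sub_apply] at eA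
  have eB := integral_sub i11 i12
  have eC := integral_sub i21 i22
  rw [eA, eB, eC] at key
  have hmapfst : (ν.prod ν).map Prod.fst = ν := by
    rw [Measure.map_fst_prod]; simp
  have hmapsnd : (ν.prod ν).map Prod.snd = ν := by
    rw [Measure.map_snd_prod]; simp
  have h11 : ∫ x, f x * g x ∂ν = ∫ p : ℝ × ℝ, f p.1 * g p.1 ∂(ν.prod ν) := by
    conv_lhs => rw [← hmapfst]
    exact integral_map measurable_fst.aemeasurable (hfm.mul hgm).aestronglyMeasurable
  have h22 : ∫ x, f x * g x ∂ν = ∫ p : ℝ × ℝ, f p.2 * g p.2 ∂(ν.prod ν) := by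
    conv_lhs => rw [← hmapsnd]
    exact integral_map measurable_snd.aemeasurable (hfm.mul hgm).aestronglyMeasurable
  have h12 : ∫ p : ℝ × ℝ, f p.1 * g p.2 ∂(ν.prod ν) = (∫ x, f x ∂ν) * ∫ x, g x ∂ν :=
    integral_prod_mul f g
  have h21 : ∫ p : ℝ × ℝ, f p.2 * g p.1 ∂(ν.prod ν) = (∫ x, g x ∂ν) * ∫ x, f x ∂ν := by
    have : (fun p : ℝ × ℝ => f p.2 * g p.1) = fun p : ℝ × ℝ => g p.1 * f p.2 := by
      funext p; ring
    rw [this, integral_prod_mul g f]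
  rw [← h11, ← h22, h12, h21] at key
  linarith [key]


lemma integral_le_one {X : Type*} [MeasurableSpace X] {μ : Measure X} [IsProbabilityMeasure μ]
    {f : X → ℝ} (hm : Measurable f) (h0 : ∀ x, 0 ≤ f x) (h1 : ∀ x, f x ≤ 1) :
    ∫ x, f x ∂μ ≤ 1 := by
  calc ∫ x, f x ∂μ ≤ ∫ _x, (1 : ℝ) ∂μ :=
        integral_mono (integrable_of_bdd hm h0 h1) (integrable_const 1) h1
    _ = 1 := by simp

lemma harris_fin (ν : Measure ℝ) [IsProbabilityMeasure ν] :
    ∀ (n : ℕ) (f g : (Fin n → ℝ) → ℝ), Measurable f → Measurable g → Antitone f →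
    Antitone g → (∀ x, 0 ≤ f x) → (∀ x, f x ≤ 1) → (∀ x, 0 ≤ g x) → (∀ x, g x ≤ 1) →
    (∫ x, f x ∂(Measure.pi fun _ => ν)) * (∫ x, g x ∂(Measure.pi fun _ => ν)) ≤
      ∫ x, f x * g x ∂(Measure.pi fun _ => ν) := by
  intro n
  induction n with
  | zero =>
    intro f g hfm hgm _ _ _ _ _ _
    rw [Measure.pi_of_empty (fun _ : Fin 0 => ν)]
    rw [integral_dirac' f _ hfm.stronglyMeasurable,
      integral_dirac' g _ hgm.stronglyMeasurable,
      integral_dirac' (fun x => f x * g x) _ (hfm.mul hgm).stronglyMeasurable]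
  | succ n ih =>
    intro f g hfm hgm hfa hga hf0 hf1 hg0 hg1
    set π' : Measure (Fin n → ℝ) := Measure.pi fun _ => ν with hπ'
    haveI : IsProbabilityMeasure π' := by infer_instance
    set e := MeasurableEquiv.piFinSuccAbove (fun _ : Fin (n + 1) => ℝ) 0 with he
    have hmp : MeasurePreserving e (Measure.pi fun _ => ν) (ν.prod π') :=
      measurePreserving_piFinSuccAbove (fun _ : Fin (n + 1) => ν) 0
    -- the symm of e is monotone in each variable
    have hsymm_mono : ∀ {x x' : ℝ} {y y' : Fin n → ℝ}, x ≤ x' → y ≤ y' →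
        e.symm (x, y) ≤ e.symm (x', y') := by
      intro x x' y y' hx hy
      have h1 : e.symm (x, y) = (0 : Fin (n+1)).insertNth x y := rfl
      have h2 : e.symm (x', y') = (0 : Fin (n+1)).insertNth x' y' := rfl
      rw [h1, h2, Fin.insertNth_le_iff]
      constructor
      · simpa using hx
      · intro j; simpa using hy j
    -- transport integrals
    have hint : ∀ (F : (Fin (n + 1) → ℝ) → ℝ), Measurable F →
        ∫ x, F x ∂(Measure.pi fun _ => ν) = ∫ p, F (e.symm p) ∂(ν.prod π') := by
      intro F hF
      have h1 : ∫ p, F (e.symm p) ∂(Measure.map (⇑e) (Measure.pi fun _ => ν)) =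
          ∫ x, F (e.symm (e x)) ∂(Measure.pi fun _ : Fin (n + 1) => ν) :=
        integral_map e.measurable.aemeasurable
          ((hF.comp e.symm.measurable).aestronglyMeasurable)
      simp only [MeasurableEquiv.symm_apply_apply] at h1
      rw [← hmp.map_eq]
      exact h1.symm
    have hfem : Measurable fun p : ℝ × (Fin n → ℝ) => f (e.symm p) :=
      hfm.comp e.symm.measurable
    have hgem : Measurable fun p : ℝ × (Fin n → ℝ) => g (e.symm p) :=
      hgm.comp e.symm.measurable
    set F : ℝ → ℝ := fun x => ∫ y, f (e.symm (x, y)) ∂π' with hF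
    set G : ℝ → ℝ := fun x => ∫ y, g (e.symm (x, y)) ∂π' with hG
    have hFm : Measurable F := hfem.stronglyMeasurable.integral_prod_right'.measurable
    have hGm : Measurable G := hgem.stronglyMeasurable.integral_prod_right'.measurable
    have hF0 : ∀ x, 0 ≤ F x := fun x => integral_nonneg fun y => hf0 _
    have hG0 : ∀ x, 0 ≤ G x := fun x => integral_nonneg fun y => hg0 _
    have hF1 : ∀ x, F x ≤ 1 := fun x =>
      integral_le_one (hfem.comp measurable_prodMk_left) (fun y => hf0 _) (fun y => hf1 _)
    have hG1 : ∀ x, G x ≤ 1 := fun x =>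
      integral_le_one (hgem.comp measurable_prodMk_left) (fun y => hg0 _) (fun y => hg1 _)
    have hFa : Antitone F := by
      intro x x' hx
      exact integral_mono
        (integrable_of_bdd (hfem.comp measurable_prodMk_left) (fun y => hf0 _)
          (fun y => hf1 _))
        (integrable_of_bdd (hfem.comp measurable_prodMk_left) (fun y => hf0 _)
          (fun y => hf1 _))
        (fun y => hfa (hsymm_mono hx (le_refl y)))
    have hGa : Antitone G := by
      intro x x' hx
      exact integral_mono
        (integrable_of_bdd (hgem.comp measurable_prodMk_left) (fun y => hg0 _)
          (fun y => hg1 _))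
        (integrable_of_bdd (hgem.comp measurable_prodMk_left) (fun y => hg0 _)
          (fun y => hg1 _))
        (fun y => hga (hsymm_mono hx (le_refl y)))
    -- step 1 : Fubini for the product integral
    have hfgint : ∫ x, f x * g x ∂(Measure.pi fun _ => ν) =
        ∫ x, ∫ y, f (e.symm (x, y)) * g (e.symm (x, y)) ∂π' ∂ν := by
      rw [hint (fun x => f x * g x) (hfm.mul hgm)]
      exact integral_prod _ (integrable_of_bdd (hfem.mul hgem)
        (fun p => mul_nonneg (hf0 _) (hg0 _))
        (fun p => mul_le_one₀ (hf1 _) (hg0 _) (hg1 _)))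
    have hfint : ∫ x, f x ∂(Measure.pi fun _ => ν) = ∫ x, F x ∂ν := by
      rw [hint _ hfm]
      exact integral_prod _ (integrable_of_bdd hfem (fun p => hf0 _) (fun p => hf1 _))
    have hgint : ∫ x, g x ∂(Measure.pi fun _ => ν) = ∫ x, G x ∂ν := by
      rw [hint _ hgm]
      exact integral_prod _ (integrable_of_bdd hgem (fun p => hg0 _) (fun p => hg1 _))
    -- step 2 : inner IH
    have hinner : ∀ x : ℝ, F x * G x ≤ ∫ y, f (e.symm (x, y)) * g (e.symm (x, y)) ∂π' := by
      intro x
      exact ih (fun y => f (e.symm (x, y))) (fun y => g (e.symm (x, y)))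
        (hfem.comp measurable_prodMk_left) (hgem.comp measurable_prodMk_left)
        (fun y y' hy => hfa (hsymm_mono (le_refl x) hy))
        (fun y y' hy => hga (hsymm_mono (le_refl x) hy))
        (fun y => hf0 _) (fun y => hf1 _) (fun y => hg0 _) (fun y => hg1 _)
    -- step 3 : outer 1-d inequality
    calc (∫ x, f x ∂(Measure.pi fun _ => ν)) * ∫ x, g x ∂(Measure.pi fun _ => ν)
        = (∫ x, F x ∂ν) * ∫ x, G x ∂ν := by rw [hfint, hgint]
      _ ≤ ∫ x, F x * G x ∂ν := chebyshev_1d hFa hGa hF0 hF1 hG0 hG1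
      _ ≤ ∫ x, ∫ y, f (e.symm (x, y)) * g (e.symm (x, y)) ∂π' ∂ν := by
          refine integral_mono ?_ ?_ hinner
          · exact integrable_of_bdd (hFm.mul hGm) (fun x => mul_nonneg (hF0 _) (hG0 _))
              (fun x => mul_le_one₀ (hF1 _) (hG0 _) (hG1 _))
          · exact integrable_of_bdd
              ((hfem.mul hgem).stronglyMeasurable.integral_prod_right'.measurable)
              (fun x => integral_nonneg fun y => mul_nonneg (hf0 _) (hg0 _))
              (fun x => integral_le_one
                ((hfem.mul hgem).comp measurable_prodMk_left)
                (fun y => mul_nonneg (hf0 _) (hg0 _))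
                (fun y => mul_le_one₀ (hf1 _) (hg0 _) (hg1 _)))
      _ = ∫ x, f x * g x ∂(Measure.pi fun _ => ν) := hfgint.symm


lemma indicator_antitone {m : ℕ} {S : Set (Fin m → ℝ)} (hS : IsLowerSet S) :
    Antitone (S.indicator (1 : (Fin m → ℝ) → ℝ)) := by
  intro x y hxy
  classical
  by_cases hy : y ∈ S
  · have hx : x ∈ S := hS hxy hy
    simp [Set.indicator_apply, hx, hy]
  · simp only [Set.indicator_of_notMem hy]
    exact Set.indicator_nonneg (fun _ _ => zero_le_one) x

lemma harris_sets (ν : Measure ℝ) [IsProbabilityMeasure ν] {m : ℕ}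
    {S T : Set (Fin m → ℝ)} (hSm : MeasurableSet S) (hTm : MeasurableSet T)
    (hSl : IsLowerSet S) (hTl : IsLowerSet T) :
    ((Measure.pi fun _ : Fin m => ν) S).toReal * ((Measure.pi fun _ : Fin m => ν) T).toReal ≤
      ((Measure.pi fun _ : Fin m => ν) (S ∩ T)).toReal := by
  classical
  have ind0 : ∀ (A : Set (Fin m → ℝ)) (x), (0:ℝ) ≤ A.indicator (1 : (Fin m → ℝ) → ℝ) x :=
    fun A x => Set.indicator_nonneg (fun _ _ => zero_le_one) x
  have ind1 : ∀ (A : Set (Fin m → ℝ)) (x), A.indicator (1 : (Fin m → ℝ) → ℝ) x ≤ 1 := by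
    intro A x
    rw [Set.indicator_apply]
    split <;> norm_num
  have h := harris_fin ν m (S.indicator (1 : (Fin m → ℝ) → ℝ))
    (T.indicator (1 : (Fin m → ℝ) → ℝ))
    (measurable_one.indicator hSm) (measurable_one.indicator hTm)
    (indicator_antitone hSl) (indicator_antitone hTl)
    (ind0 S) (ind1 S) (ind0 T) (ind1 T)
  have hmul : (fun x => S.indicator (1 : (Fin m → ℝ) → ℝ) x *
      T.indicator (1 : (Fin m → ℝ) → ℝ) x) = (S ∩ T).indicator (1 : (Fin m → ℝ) → ℝ) := by
    funext x
    by_cases hx : x ∈ S <;> by_cases hx' : x ∈ T <;>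
      simp [Set.indicator_apply, hx, hx', Set.mem_inter_iff]
  rw [integral_indicator_one hSm, integral_indicator_one hTm] at h
  calc ((Measure.pi fun _ : Fin m => ν) S).toReal *
        ((Measure.pi fun _ : Fin m => ν) T).toReal
      ≤ ∫ x, S.indicator (1 : (Fin m → ℝ) → ℝ) x * T.indicator (1 : (Fin m → ℝ) → ℝ) x
          ∂(Measure.pi fun _ : Fin m => ν) := h
    _ = ((Measure.pi fun _ : Fin m => ν) (S ∩ T)).toReal := by
        rw [show (fun x => S.indicator (1 : (Fin m → ℝ) → ℝ) x *
            T.indicator (1 : (Fin m → ℝ) → ℝ) x) =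
            (S ∩ T).indicator (1 : (Fin m → ℝ) → ℝ) from hmul,
          integral_indicator_one (hSm.inter hTm)]
        simp only [measureReal_def]

lemma harris_iter (ν : Measure ℝ) [IsProbabilityMeasure ν] {m : ℕ}
    (S : ℕ → Set (Fin m → ℝ)) (hmeas : ∀ i, MeasurableSet (S i))
    (hlow : ∀ i, IsLowerSet (S i)) (K : ℕ) :
    ∏ i ∈ Finset.range K, ((Measure.pi fun _ : Fin m => ν) (S i)).toReal ≤
      ((Measure.pi fun _ : Fin m => ν) (⋂ i ∈ Finset.range K, S i)).toReal := by
  induction K with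
  | zero => simp
  | succ K ih =>
    have hbig_meas : MeasurableSet (⋂ i ∈ Finset.range K, S i) :=
      MeasurableSet.biInter (Finset.range K).countable_toSet (fun i _ => hmeas i)
    have hbig_low : IsLowerSet (⋂ i ∈ Finset.range K, S i) := by
      intro x y hxy hx
      simp only [Set.mem_iInter] at hx ⊢
      exact fun i hi => hlow i hxy (hx i hi)
    have hins : (⋂ i ∈ Finset.range (K + 1), S i) =
        ((⋂ i ∈ Finset.range K, S i) ∩ S K) := by
      rw [Finset.range_add_one]
      ext x
      simp only [Set.mem_iInter, Set.mem_inter_iff, Finset.mem_insert, Finset.mem_range]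
      constructor
      · intro h
        exact ⟨fun i hi => h i (Or.inr hi), h K (Or.inl rfl)⟩
      · rintro ⟨h1, h2⟩ i hi
        rcases hi with rfl | hi
        · exact h2
        · exact h1 i hi
    rw [Finset.prod_range_succ, hins]
    calc (∏ i ∈ Finset.range K, ((Measure.pi fun _ : Fin m => ν) (S i)).toReal) *
          ((Measure.pi fun _ : Fin m => ν) (S K)).toReal
        ≤ ((Measure.pi fun _ : Fin m => ν) (⋂ i ∈ Finset.range K, S i)).toReal *
          ((Measure.pi fun _ : Fin m => ν) (S K)).toReal :=
          mul_le_mul_of_nonneg_right ih ENNReal.toReal_nonneg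
      _ ≤ _ := harris_sets ν hbig_meas (hmeas K) hbig_low (hlow K)


end Harris

-- ### transfer between `Ω` and the finite product space
section Transfer
variable {Ω : Type} [MeasureSpace Ω]

/-- enumeration of the finite region -/
noncomputable def emb (n : ℕ) (j : Fin (region n).card) : Vertex :=
  ((region n).equivFin.symm j : ↥(region n))

/-- extension of a tuple indexed by the region to a full configuration -/
noncomputable def extFun (n : ℕ) (y : Fin (region n).card → ℝ) : Vertex → ℝ := fun p =>
  if h : p ∈ region n then y ((region n).equivFin ⟨p, h⟩) else 0

lemma emb_mem (n : ℕ) (j : Fin (region n).card) : emb n j ∈ region n :=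
  ((region n).equivFin.symm j).2

lemma extFun_agree (n : ℕ) (ω : Vertex → ℝ) {p : Vertex} (hp : p ∈ region n) :
    extFun n (fun j => ω (emb n j)) p = ω p := by
  simp only [extFun, dif_pos hp, emb, Equiv.symm_apply_apply]

lemma extFun_mono (n : ℕ) {y y' : Fin (region n).card → ℝ} (h : y ≤ y') :
    extFun n y ≤ extFun n y' := by
  intro p
  by_cases hp : p ∈ region n
  · simpa only [extFun, dif_pos hp] using h _
  · simp [extFun, dif_neg hp]

lemma measurable_extFun (n : ℕ) : Measurable (extFun n) := by
  refine measurable_pi_lambda _ fun p => ?_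
  by_cases hp : p ∈ region n
  · simpa only [extFun, dif_pos hp] using measurable_pi_apply _
  · simpa only [extFun, dif_neg hp] using measurable_const

lemma measurable_W (w : Ω → Vertex → ℝ) (hmeas : ∀ v : Vertex, Measurable fun x => w x v)
    (n : ℕ) : Measurable fun x => (fun j => w x (emb n j)) :=
  measurable_pi_lambda _ fun j => hmeas _

lemma map_W_eq_pi (w : Ω → Vertex → ℝ) (hw : IIDExponential Ω w) (n : ℕ) :
    Measure.map (fun x => (fun j => w x (emb n j))) ℙ =
      Measure.pi fun _ : Fin (region n).card => expMeasure 1 := by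
  classical
  haveI : IsProbabilityMeasure (ℙ : Measure Ω) := hw.1
  haveI : IsProbabilityMeasure (expMeasure 1) := isProbabilityMeasure_expMeasure one_pos
  refine (Measure.pi_eq fun B hB => ?_).symm
  have hWm : Measurable fun x => (fun j => w x (emb n j)) := measurable_W w hw.2.1 n
  rw [Measure.map_apply hWm (MeasurableSet.univ_pi hB)]
  set sets : Vertex → Set ℝ := fun v =>
    if h : v ∈ region n then B ((region n).equivFin ⟨v, h⟩) else Set.univ with hsets
  have hsets_emb : ∀ j, sets (emb n j) = B j := by
    intro j
    have h : emb n j ∈ region n := emb_mem n j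
    have : ((region n).equivFin ⟨emb n j, h⟩ : Fin (region n).card) = j := by
      have : (⟨emb n j, h⟩ : ↥(region n)) = (region n).equivFin.symm j := rfl
      rw [this, Equiv.apply_symm_apply]
    simp only [hsets, dif_pos h, this]
  have hpre : (fun x => (fun j => w x (emb n j))) ⁻¹' Set.pi Set.univ B =
      ⋂ v ∈ region n, (fun x => w x v) ⁻¹' sets v := by
    ext x
    simp only [Set.mem_preimage, Set.mem_pi, Set.mem_univ, forall_true_left, Set.mem_iInter]
    constructor
    · intro h v hv
      have := h ((region n).equivFin ⟨v, hv⟩)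
      have hemb : emb n ((region n).equivFin ⟨v, hv⟩) = v := by
        simp only [emb, Equiv.symm_apply_apply]
      rw [hemb] at this
      simpa only [hsets, dif_pos hv] using this
    · intro h j
      have := h (emb n j) (emb_mem n j)
      rwa [hsets_emb j] at this
  rw [hpre]
  have hsets_meas : ∀ v, v ∈ region n → MeasurableSet (sets v) := by
    intro v hv
    simp only [hsets, dif_pos hv]
    exact hB _
  rw [hw.2.2.1.measure_inter_preimage_eq_mul (region n) hsets_meas]
  have hfact : ∀ v ∈ region n, (ℙ : Measure Ω) ((fun x => w x v) ⁻¹' sets v) =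
      expMeasure 1 (sets v) := by
    intro v hv
    rw [← hw.2.2.2 v, Measure.map_apply (hw.2.1 v) (hsets_meas v hv)]
  calc ∏ v ∈ region n, (ℙ : Measure Ω) ((fun x => w x v) ⁻¹' sets v)
      = ∏ v ∈ region n, expMeasure 1 (sets v) := Finset.prod_congr rfl hfact
    _ = ∏ v : ↥(region n), expMeasure 1 (sets v.val) := (Finset.prod_coe_sort _ _).symm
    _ = ∏ j : Fin (region n).card, expMeasure 1 (sets (emb n j)) :=
        (Equiv.prod_comp (region n).equivFin.symm
          (fun v : ↥(region n) => expMeasure 1 (sets v.val))).symm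
    _ = ∏ j : Fin (region n).card, expMeasure 1 (B j) := by
        refine Finset.prod_congr rfl fun j _ => ?_
        rw [hsets_emb j]

end Transfer

end Aux

/-- **Probability lower bound for the event `Short^L`** : fix `k₁ > 0` and let `β > 0` be
the absolute constant for which `ℙ((Short^L_i)^c) ≤ C e^{-cM³} < 1/2` holds for all large
`M`. Then for all `M` large enough (independent of `δ`) there are positive constants
`C', c'` independent of `δ` such that for all small `δ` and large `n`,
`ℙ(Short^L) ≥ C' e^{-c' δ^{-3/2}}`, where `Short^L = ∩_i Short^L_i`. -/
theorem shortL_event_lower_bound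
    (Ω : Type) [MeasureSpace Ω] (w : Ω → Vertex → ℝ) (hw : IIDExponential Ω w)
    (k1 : ℝ) (hk1 : 0 < k1) (β : ℝ) (hβ : 0 < β)
    (hshort : ∃ C c : ℝ, 0 < C ∧ 0 < c ∧
      ∃ M0 : ℝ, ∀ M : ℝ, M0 ≤ M →
        ∃ δ0 : ℝ, 0 < δ0 ∧ ∀ δ : ℝ, 0 < δ → δ < δ0 →
          ∀ i : ℕ, (i : ℝ) ≤ (k1 * δ ^ (3/2 : ℝ))⁻¹ - 2 →
            ∃ n0 : ℕ, ∀ n : ℕ, n0 ≤ n →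
              (ℙ {x : Ω | ShortLCompl n δ k1 β M i (w x)}).toReal ≤
                  C * Real.exp (-c * M ^ 3) ∧
                C * Real.exp (-c * M ^ 3) < 1 / 2) :
    ∃ M0 : ℝ, ∀ M : ℝ, M0 ≤ M →
      ∃ C' c' : ℝ, 0 < C' ∧ 0 < c' ∧
        ∃ δ0 : ℝ, 0 < δ0 ∧ ∀ δ : ℝ, 0 < δ → δ < δ0 →
          ∃ n0 : ℕ, ∀ n : ℕ, n0 ≤ n →
            C' * Real.exp (-c' * δ ^ (-(3/2) : ℝ)) ≤
              (ℙ {x : Ω | ∀ i : ℕ, (i : ℝ) ≤ (k1 * δ ^ (3/2 : ℝ))⁻¹ - 2 →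
                  ¬ ShortLCompl n δ k1 β M i (w x)}).toReal := by
  classical
  obtain ⟨C, c, hC, hc, M0, hM0⟩ := hshort
  refine ⟨M0, fun M hM => ?_⟩
  obtain ⟨δ0h, hδ0h, hδh⟩ := hM0 M hM
  have hlog2 : (0 : ℝ) < Real.log 2 := Real.log_pos one_lt_two
  refine ⟨1, Real.log 2 / k1, one_pos, div_pos hlog2 hk1,
    min δ0h (min 1 ((2 * k1) ^ (-(2/3) : ℝ))), ?_, ?_⟩
  · exact lt_min hδ0h (lt_min one_pos (Real.rpow_pos_of_pos (by linarith) _))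
  intro δ hδpos hδlt
  have hδlth : δ < δ0h := lt_of_lt_of_le hδlt (min_le_left _ _)
  have hδle1 : δ ≤ 1 :=
    le_of_lt (lt_of_lt_of_le hδlt (le_trans (min_le_right _ _) (min_le_left _ _)))
  have h32pos : (0 : ℝ) < δ ^ (3/2 : ℝ) := Real.rpow_pos_of_pos hδpos _
  have hkpos : (0 : ℝ) < k1 * δ ^ (3/2 : ℝ) := mul_pos hk1 h32pos
  -- `k1 δ^{3/2} ≤ 1/2`
  have hhalf : k1 * δ ^ (3/2 : ℝ) ≤ 1 / 2 := by
    have h1 : δ ≤ (2 * k1) ^ (-(2/3) : ℝ) :=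
      le_of_lt (lt_of_lt_of_le hδlt (le_trans (min_le_right _ _) (min_le_right _ _)))
    have h2 : δ ^ (3/2 : ℝ) ≤ ((2 * k1) ^ (-(2/3) : ℝ)) ^ (3/2 : ℝ) :=
      Real.rpow_le_rpow (le_of_lt hδpos) h1 (by norm_num)
    have h3 : ((2 * k1) ^ (-(2/3) : ℝ)) ^ (3/2 : ℝ) = (2 * k1)⁻¹ := by
      rw [← Real.rpow_mul (by positivity : (0:ℝ) ≤ 2 * k1),
        show (-(2/3) : ℝ) * (3/2) = -1 by norm_num, Real.rpow_neg_one]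
    have h4 : δ ^ (3/2 : ℝ) ≤ (2 * k1)⁻¹ := h3 ▸ h2
    calc k1 * δ ^ (3/2 : ℝ) ≤ k1 * (2 * k1)⁻¹ :=
          mul_le_mul_of_nonneg_left h4 (le_of_lt hk1)
      _ = 1 / 2 := by field_simp
  have hinv2 : (2 : ℝ) ≤ (k1 * δ ^ (3/2 : ℝ))⁻¹ := by
    have := one_div_le_one_div_of_le hkpos hhalf
    rw [one_div, one_div] at this
    simpa using this
  set B : ℝ := (k1 * δ ^ (3/2 : ℝ))⁻¹ - 2 with hB
  have hBpos : (0 : ℝ) ≤ B := by simp only [hB]; linarith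
  set N : ℕ := Nat.floor B with hN
  set nf : ℕ → ℕ := fun i =>
    if h : (i : ℝ) ≤ B then (hδh δ hδpos hδlth i h).choose else 0 with hnf
  refine ⟨max 1 ((Finset.range (N + 1)).sup nf), fun n hn => ?_⟩
  have hn1 : 1 ≤ n := le_trans (le_max_left _ _) hn
  set q : ℝ := C * Real.exp (-c * M ^ 3) with hq
  have hiB_of_mem : ∀ i ∈ Finset.range (N + 1), (i : ℝ) ≤ B := by
    intro i hi
    have hiN : i ≤ N := Nat.lt_succ_iff.mp (Finset.mem_range.mp hi)
    calc (i : ℝ) ≤ (N : ℝ) := Nat.cast_le.mpr hiN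
      _ ≤ B := Nat.floor_le hBpos
  have hP : ∀ i ∈ Finset.range (N + 1),
      (ℙ {x : Ω | ShortLCompl n δ k1 β M i (w x)}).toReal ≤ q ∧ q < 1 / 2 := by
    intro i hi
    have hiB : (i : ℝ) ≤ B := hiB_of_mem i hi
    have hspec := (hδh δ hδpos hδlth i hiB).choose_spec
    have hle : nf i ≤ n := by
      have h1 : nf i ≤ (Finset.range (N + 1)).sup nf := Finset.le_sup hi
      exact le_trans (le_trans h1 (le_max_right _ _)) hn
    have heq : nf i = (hδh δ hδpos hδlth i hiB).choose := by
      simp only [hnf, dif_pos hiB]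
    rw [heq] at hle
    exact hspec n hle
  have hq2 : q < 1 / 2 := (hP 0 (Finset.mem_range.mpr (Nat.succ_pos _))).2
  -- probabilistic setup
  haveI hPμ : IsProbabilityMeasure (ℙ : Measure Ω) := hw.1
  haveI : IsProbabilityMeasure (expMeasure 1) := isProbabilityMeasure_expMeasure one_pos
  set π : Measure (Fin (region n).card → ℝ) :=
    Measure.pi fun _ : Fin (region n).card => expMeasure 1 with hπ
  haveI : IsProbabilityMeasure π := by rw [hπ]; infer_instance
  set W : Ω → Fin (region n).card → ℝ := fun x => (fun j => w x (emb n j)) with hW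
  have hWm : Measurable W := measurable_W w hw.2.1 n
  have hmap : Measure.map W ℙ = π := map_W_eq_pi w hw n
  set S : ℕ → Set (Fin (region n).card → ℝ) :=
    fun i => {y | ShortLCompl n δ k1 β M i (extFun n y)}ᶜ with hS
  have hSmeas : ∀ i, MeasurableSet (S i) := fun i =>
    ((measurable_extFun n) (measurableSet_shortLCompl n δ k1 β M i)).compl
  have hSlow : ∀ i, IsLowerSet (S i) := by
    intro i y' y hy hmem hcontra
    exact hmem (shortLCompl_mono (extFun_mono n hy) hcontra)
  have hcongr : ∀ (x : Ω) (i : ℕ),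
      ShortLCompl n δ k1 β M i (extFun n (W x)) ↔ ShortLCompl n δ k1 β M i (w x) := by
    intro x i
    constructor
    · exact fun h => shortLCompl_congr hn1 (le_of_lt hδpos) hδle1
        (fun p hp => extFun_agree n (w x) hp) h
    · exact fun h => shortLCompl_congr hn1 (le_of_lt hδpos) hδle1
        (fun p hp => (extFun_agree n (w x) hp).symm) h
  have hbig_meas : MeasurableSet (⋂ i ∈ Finset.range (N + 1), S i) :=
    MeasurableSet.biInter (Finset.range (N + 1)).countable_toSet (fun i _ => hSmeas i)
  have hset : {x : Ω | ∀ i : ℕ, (i : ℝ) ≤ (k1 * δ ^ (3/2 : ℝ))⁻¹ - 2 →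
      ¬ ShortLCompl n δ k1 β M i (w x)} = W ⁻¹' (⋂ i ∈ Finset.range (N + 1), S i) := by
    ext x
    simp only [Set.mem_setOf_eq, Set.mem_preimage, Set.mem_iInter, hS, Set.mem_compl_iff]
    constructor
    · intro h i hi hcontra
      exact h i (hiB_of_mem i hi) ((hcongr x i).mp hcontra)
    · intro h i hiB hcontra
      have hi : i ∈ Finset.range (N + 1) :=
        Finset.mem_range.mpr (Nat.lt_succ_iff.mpr (Nat.le_floor hiB))
      exact h i hi ((hcongr x i).mpr hcontra)
  have hval : (ℙ {x : Ω | ∀ i : ℕ, (i : ℝ) ≤ (k1 * δ ^ (3/2 : ℝ))⁻¹ - 2 →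
      ¬ ShortLCompl n δ k1 β M i (w x)}) = π (⋂ i ∈ Finset.range (N + 1), S i) := by
    rw [hset, ← hmap, Measure.map_apply hWm hbig_meas]
  -- per-event lower bound
  have hSbound : ∀ i ∈ Finset.range (N + 1), (1 : ℝ) / 2 ≤ (π (S i)).toReal := by
    intro i hi
    obtain ⟨hP1, hP2⟩ := hP i hi
    have hpre : W ⁻¹' (S i)ᶜ = {x : Ω | ShortLCompl n δ k1 β M i (w x)} := by
      ext x
      simp only [Set.mem_preimage, hS, compl_compl, Set.mem_setOf_eq]
      exact hcongr x i
    have hcompl_val : π (S i)ᶜ = ℙ {x : Ω | ShortLCompl n δ k1 β M i (w x)} := by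
      rw [← hmap, Measure.map_apply hWm (hSmeas i).compl, hpre]
    have hsum : (π (S i)).toReal + (π (S i)ᶜ).toReal = 1 := by
      rw [← ENNReal.toReal_add (measure_ne_top _ _) (measure_ne_top _ _),
        prob_add_prob_compl (hSmeas i)]
      simp
    have hcle : (π (S i)ᶜ).toReal ≤ q := by rw [hcompl_val]; exact hP1
    linarith
  -- exponential comparison
  have hNB : ((N : ℝ) + 1) ≤ (k1 * δ ^ (3/2 : ℝ))⁻¹ := by
    have h1 : (N : ℝ) ≤ B := Nat.floor_le hBpos
    simp only [hB] at h1
    linarith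
  have hexp : Real.exp (-(Real.log 2 / k1) * δ ^ (-(3/2) : ℝ)) ≤ ((1 : ℝ) / 2) ^ (N + 1) := by
    have hpow : ((1 : ℝ) / 2) ^ (N + 1) =
        Real.exp (-(((N : ℝ) + 1) * Real.log 2)) := by
      rw [← Real.exp_log (pow_pos (by norm_num : (0:ℝ) < 1/2) (N + 1)), Real.log_pow]
      congr 1
      rw [one_div, Real.log_inv]
      push_cast
      ring
    rw [hpow, Real.exp_le_exp]
    have hrp : δ ^ (-(3/2) : ℝ) = (δ ^ (3/2 : ℝ))⁻¹ := by
      rw [← Real.rpow_neg (le_of_lt hδpos)]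
    rw [hrp]
    have hmul : Real.log 2 / k1 * (δ ^ (3/2 : ℝ))⁻¹ = Real.log 2 * (k1 * δ ^ (3/2 : ℝ))⁻¹ := by
      rw [mul_inv]
      ring
    have : ((N : ℝ) + 1) * Real.log 2 ≤ (k1 * δ ^ (3/2 : ℝ))⁻¹ * Real.log 2 :=
      mul_le_mul_of_nonneg_right hNB (le_of_lt hlog2)
    nlinarith [this, hmul]
  -- put everything together
  calc (1 : ℝ) * Real.exp (-(Real.log 2 / k1) * δ ^ (-(3/2) : ℝ))
      = Real.exp (-(Real.log 2 / k1) * δ ^ (-(3/2) : ℝ)) := one_mul _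
    _ ≤ ((1 : ℝ) / 2) ^ (N + 1) := hexp
    _ = ∏ _i ∈ Finset.range (N + 1), ((1 : ℝ) / 2) := by
        rw [Finset.prod_const, Finset.card_range]
    _ ≤ ∏ i ∈ Finset.range (N + 1), (π (S i)).toReal :=
        Finset.prod_le_prod (fun i _ => by norm_num) hSbound
    _ ≤ (π (⋂ i ∈ Finset.range (N + 1), S i)).toReal := by
        have := harris_iter (expMeasure 1) S hSmeas hSlow (N + 1)
        simpa only [← hπ] using this
    _ = _ := by rw [hval]

end LPP
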